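/- Let u : ℕ → ℝ with u ∈ Λ, and let (h,β) ∈ Γ(u) be decreasing from N ∈ ℕ with S(u,h) ∩ [N,∞) ≠ ∅. Then for every j ∈ S(u,h) with j ≥ N and every m ∈ Argmax(u), one has (m : ℝ) ≤ F_u(j,h,β); in particular every maximizer of u is bounded above by F_u(j,h,β). -/

import Mathlib

open Set Filter

/-- Ω([0,1]): functions ℝ → ℝ strictly increasing and continuous on [0,1]. -/
def OmegaFun (f : ℝ → ℝ) : Prop :=
  StrictMonoOn f (Set.Icc 0 1) ∧ ContinuousOn f (Set.Icc 0 1)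

/-- (h,β) ∈ Γ(u): h k ∈ Ω([0,1]), β k ∈ (0,1) and u k ≤ h k (β k ^ k) for all k. -/
def InGamma (u : ℕ → ℝ) (h : ℕ → ℝ → ℝ) (β : ℕ → ℝ) : Prop :=
  (∀ k, OmegaFun (h k)) ∧ (∀ k, β k ∈ Set.Ioo (0:ℝ) 1) ∧ (∀ k, u k ≤ h k (β k ^ k))

/-- (h,β) is decreasing from N. -/
def DecreasingFrom (h : ℕ → ℝ → ℝ) (β : ℕ → ℝ) (N : ℕ) : Prop :=
  ∀ n, N ≤ n → (∀ x ∈ Set.Icc (0:ℝ) 1, h (n+1) x ≤ h n x) ∧ β (n+1) ≤ β n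

/-- V(u) is the supremum of u; u ∈ Λ means u is bounded above. -/
noncomputable def V (u : ℕ → ℝ) : ℝ := sSup (Set.range u)

def MemLambda (u : ℕ → ℝ) : Prop := BddAbove (Set.range u)

noncomputable def Argmax (u : ℕ → ℝ) : Set ℕ := {k | u k = V u}

lemma natCast_le_log_div_log_of_le_pow {x b : ℝ} {m : ℕ} (hx : 0 < x) (hb₀ : 0 < b)
    (hb₁ : b < 1) (hxb : x ≤ b ^ m) : (m : ℝ) ≤ Real.log x / Real.log b := by
  rw [le_div_iff_of_neg (Real.log_neg hb₀ hb₁), ← Real.log_pow]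
  exact Real.log_le_log hx hxb

lemma le_of_mem_Argmax {u : ℕ → ℝ} (hu : MemLambda u) {m : ℕ} (hm : m ∈ Argmax u) (k : ℕ) :
    u k ≤ u m :=
  hm ▸ le_csSup hu ⟨k, rfl⟩

namespace InGamma

variable {u : ℕ → ℝ} {h : ℕ → ℝ → ℝ} {β : ℕ → ℝ}

lemma strictMonoOn (hΓ : InGamma u h β) (k : ℕ) : StrictMonoOn (h k) (Icc 0 1) :=
  (hΓ.1 k).1

lemma pow_mem_Icc (hΓ : InGamma u h β) (k n : ℕ) : β k ^ n ∈ Icc (0 : ℝ) 1 :=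
  ⟨pow_nonneg (hΓ.2.1 k).1.le n, pow_le_one₀ (hΓ.2.1 k).1.le (hΓ.2.1 k).2.le⟩

end InGamma

namespace DecreasingFrom

variable {h : ℕ → ℝ → ℝ} {β : ℕ → ℝ} {N : ℕ}

lemma antitoneOn_apply (hdec : DecreasingFrom h β N) {x : ℝ} (hx : x ∈ Icc (0 : ℝ) 1) :
    AntitoneOn (fun n ↦ h n x) (Ici N) :=
  antitoneOn_nat_Ici_of_succ_le fun n hn ↦ (hdec n hn).1 x hx

lemma antitoneOn_β (hdec : DecreasingFrom h β N) : AntitoneOn β (Ici N) :=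
  antitoneOn_nat_Ici_of_succ_le fun n hn ↦ (hdec n hn).2

end DecreasingFrom

lemma InGamma.le_apply_pow_of_le {u : ℕ → ℝ} {h : ℕ → ℝ → ℝ} {β : ℕ → ℝ} {N : ℕ}
    (hΓ : InGamma u h β) (hdec : DecreasingFrom h β N) {j k : ℕ} (hNj : N ≤ j) (hjk : j ≤ k) :
    u k ≤ h j (β j ^ k) := by
  have hNk : N ≤ k := hNj.trans hjk
  calc u k ≤ h k (β k ^ k) := hΓ.2.2 k
    _ ≤ h j (β k ^ k) := hdec.antitoneOn_apply (hΓ.pow_mem_Icc k k) hNj hNk hjk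
    _ ≤ h j (β j ^ k) :=
        (hΓ.strictMonoOn j).monotoneOn (hΓ.pow_mem_Icc k k) (hΓ.pow_mem_Icc j k) <|
          pow_le_pow_left₀ (hΓ.2.1 k).1.le (hdec.antitoneOn_β hNj hNk hjk) k

theorem maximizer_le_upper_bound_functional_general (u : ℕ → ℝ) (hu : MemLambda u)
    (h : ℕ → ℝ → ℝ) (β : ℕ → ℝ) (N : ℕ)
    (hΓ : InGamma u h β) (hdec : DecreasingFrom h β N)
    (j : ℕ) (hNj : N ≤ j)
    (xj : ℝ) (hxj : xj ∈ Set.Ioc (0:ℝ) 1) (hhxj : h j xj = u j)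
    (m : ℕ) (hm : m ∈ Argmax u) :
    (m : ℝ) ≤ Real.log xj / Real.log (β j) := by
  obtain ⟨hβ₀, hβ₁⟩ := hΓ.2.1 j
  -- Compare at `k = max j m`: `u j ≤ u k` holds both when `k = j` and when `k = m` is a maximizer.
  have hjk : u j ≤ u (max j m) := by
    rcases max_choice j m with hk | hk <;> rw [hk]
    exact le_of_mem_Argmax hu hm j
  have hu_le : u j ≤ h j (β j ^ m) :=
    calc u j ≤ h j (β j ^ max j m) := hjk.trans (hΓ.le_apply_pow_of_le hdec hNj (le_max_left j m))
      _ ≤ h j (β j ^ m) :=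
          (hΓ.strictMonoOn j).monotoneOn (hΓ.pow_mem_Icc j _) (hΓ.pow_mem_Icc j m) <|
            pow_le_pow_of_le_one hβ₀.le hβ₁.le (le_max_right j m)
  have hx_le : xj ≤ β j ^ m :=
    ((hΓ.strictMonoOn j).le_iff_le (Ioc_subset_Icc_self hxj) (hΓ.pow_mem_Icc j m)).1
      (hhxj ▸ hu_le)
  exact natCast_le_log_div_log_of_le_pow hxj.1 hβ₀ hβ₁ hx_le

/-- for a usefully decreasing pair and j ∈ S(u,h) with j ≥ N, every
maximizer m of u satisfies (m : ℝ) ≤ F_u(j,h,β). -/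
theorem maximizer_le_upper_bound_functional (u : ℕ → ℝ) (hu : MemLambda u)
    (h : ℕ → ℝ → ℝ) (β : ℕ → ℝ) (N : ℕ)
    (hΓ : InGamma u h β) (hdec : DecreasingFrom h β N)
    (husef : ∃ k : ℕ, N ≤ k ∧ h k 0 < u k)
    (j : ℕ) (hNj : N ≤ j) (hjS : h j 0 < u j)
    (xj : ℝ) (hxj : xj ∈ Set.Ioc (0:ℝ) 1) (hhxj : h j xj = u j)
    (m : ℕ) (hm : m ∈ Argmax u) :
    (m : ℝ) ≤ Real.log xj / Real.log (β j) :=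
  maximizer_le_upper_bound_functional_general u hu h β N hΓ hdec j hNj xj hxj hhxj m hm
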